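/- A finitely aligned k-graph Λ is cofinal (for all v, w ∈ Λ^0 there exists a finite exhaustive set E ⊆ wΛ such that vΛs(α) ≠ ∅ for every α ∈ E) if and only if for every v ∈ Λ^0 and every boundary path x ∈ ∂Λ there exists n ≤ d(x) with vΛx(n) ≠ ∅. -/

import Mathlib

/-!
If `Λ` is not cofinal, there are vertices `v, w` such that every finite exhaustive set at `w`
contains a path whose source `v` cannot reach. Refining a finite exhaustive set by finite
exhaustive sets at the sources of its elements gives again a finite exhaustive set, so this
failure propagates: at such a vertex, every finite exhaustive set contains a path ending at
another such vertex. Since `Ext(μ; E)` is finite exhaustive at `s(μ)` when `Λ` is finitely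
aligned, a finite path from `w` ending at such a vertex can be extended to one that still does
and passes through any prescribed finite exhaustive set at any of its vertices. Running through
all (vertex position, finite set) pairs infinitely often, the extensions converge to a boundary
path, and `v` reaches none of its vertices. Conversely, a boundary path meets the finite
exhaustive set that cofinality provides at its range.
-/

/-- A `k`-graph: a countable category `Λ` with a degree functor `d : Λ → ℕ^k`
satisfying the factorisation property. Morphisms form the type `Mor`,
objects (vertices) the type `Obj`. -/
structure KGraph (k : ℕ) where
  Obj : Type
  Mor : Type
  countableObj : Countable Obj
  countableMor : Countable Mor
  r : Mor → Obj
  s : Mor → Obj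
  d : Mor → (Fin k → ℕ)
  id : Obj → Mor
  comp : ∀ μ ν : Mor, s μ = r ν → Mor
  r_id : ∀ v, r (id v) = v
  s_id : ∀ v, s (id v) = v
  d_id : ∀ v, d (id v) = 0
  r_comp : ∀ μ ν h, r (comp μ ν h) = r μ
  s_comp : ∀ μ ν h, s (comp μ ν h) = s ν
  d_comp : ∀ μ ν h, d (comp μ ν h) = d μ + d ν
  id_comp : ∀ μ : Mor, comp (id (r μ)) μ (s_id (r μ)) = μ
  comp_id : ∀ μ : Mor, comp μ (id (s μ)) ((r_id (s μ)).symm) = μ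
  assoc : ∀ (μ ν ρ : Mor) (h₁ : s μ = r ν) (h₂ : s ν = r ρ),
    comp (comp μ ν h₁) ρ ((s_comp μ ν h₁).trans h₂)
      = comp μ (comp ν ρ h₂) (h₁.trans (r_comp ν ρ h₂).symm)
  factor : ∀ (lam : Mor) (m n : Fin k → ℕ), d lam = m + n →
    ∃! p : {q : Mor × Mor // s q.1 = r q.2},
      d p.val.1 = m ∧ d p.val.2 = n ∧ lam = comp p.val.1 p.val.2 p.property

namespace KGraph

variable {k : ℕ} (Λ : KGraph k)

/-- `μ` is an initial segment of `lam`, i.e. `lam = μρ` for some `ρ`. -/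
def InitSeg (μ lam : Λ.Mor) : Prop :=
  ∃ (ρ : Λ.Mor) (h : Λ.s μ = Λ.r ρ), lam = Λ.comp μ ρ h

/-- The set of minimal common extensions of `μ` and `ν`. -/
def MCE (μ ν : Λ.Mor) : Set Λ.Mor :=
  {lam | Λ.d lam = Λ.d μ ⊔ Λ.d ν ∧ Λ.InitSeg μ lam ∧ Λ.InitSeg ν lam}

/-- `Λ` is finitely aligned if all `MCE` sets are finite. -/
def FinitelyAligned : Prop := ∀ μ ν : Λ.Mor, (Λ.MCE μ ν).Finite

/-- Aperiodicity: distinct paths with the same source admit a common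
extension `τ` with `MCE (ατ, βτ) = ∅`. -/
def Aperiodic : Prop :=
  ∀ α β : Λ.Mor, α ≠ β → Λ.s α = Λ.s β →
    ∃ (τ : Λ.Mor) (hα : Λ.s α = Λ.r τ) (hβ : Λ.s β = Λ.r τ),
      Λ.MCE (Λ.comp α τ hα) (Λ.comp β τ hβ) = ∅

/-- `E` is a finite exhaustive subset of `vΛ`. -/
def IsFE (v : Λ.Obj) (E : Set Λ.Mor) : Prop :=
  E.Finite ∧ (∀ α ∈ E, Λ.r α = v) ∧
    ∀ μ : Λ.Mor, Λ.r μ = v → ∃ lam ∈ E, (Λ.MCE μ lam).Nonempty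

/-- The segment `lam(p,q)` of a path `lam`, for `p ≤ q ≤ d lam`,
obtained from the factorisation property. -/
noncomputable def seg (lam : Λ.Mor) (p q : Fin k → ℕ) (hpq : p ≤ q) (hq : q ≤ Λ.d lam) :
    Λ.Mor := by
  have h1 : Λ.d lam = p + (Λ.d lam - p) := by
    funext i; exact (Nat.add_sub_cancel' ((hpq.trans hq) i)).symm
  have hspec := (Λ.factor lam p (Λ.d lam - p) h1).exists.choose_spec
  refine (Λ.factor ((Λ.factor lam p (Λ.d lam - p) h1).exists.choose).val.2
      (q - p) (Λ.d lam - q) ?_).exists.choose.val.1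
  rw [hspec.2.1]
  funext i
  have h3 : p i ≤ q i := hpq i
  have h4 : q i ≤ Λ.d lam i := hq i
  simp only [Pi.sub_apply, Pi.add_apply]
  omega

/-- A (possibly infinite) path in `Λ`: a degree-preserving functor from
`Ω_{k,m}` (for `m = deg ∈ (ℕ ∪ {∞})^k`) to `Λ`, recorded by its segments. -/
structure InfPath (Λ : KGraph k) where
  deg : Fin k → ℕ∞
  seg : ∀ p q : Fin k → ℕ, p ≤ q → (∀ i, (q i : ℕ∞) ≤ deg i) → Λ.Mor
  d_seg : ∀ p q hpq hq, Λ.d (seg p q hpq hq) = q - p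
  comp_seg : ∀ (p q r : Fin k → ℕ) (hpq : p ≤ q) (hqr : q ≤ r)
      (hq : ∀ i, (q i : ℕ∞) ≤ deg i) (hr : ∀ i, (r i : ℕ∞) ≤ deg i),
    ∃ h : Λ.s (seg p q hpq hq) = Λ.r (seg q r hqr hr),
      Λ.comp (seg p q hpq hq) (seg q r hqr hr) h = seg p r (hpq.trans hqr) hr

/-- The vertex `x(n)` of an infinite path. -/
def InfPath.vert {Λ : KGraph k} (x : Λ.InfPath) (n : Fin k → ℕ) (hn : ∀ i, (n i : ℕ∞) ≤ x.deg i) : Λ.Obj :=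
  Λ.r (x.seg n n le_rfl hn)

/-- The range `r(x) = x(0)` of an infinite path. -/
def InfPath.rng {Λ : KGraph k} (x : Λ.InfPath) : Λ.Obj :=
  Λ.r (x.seg 0 0 le_rfl (fun i => by simp))

/-- `x` is a boundary path: it hits every finite exhaustive set. -/
def IsBoundary (x : Λ.InfPath) : Prop :=
  ∀ (n : Fin k → ℕ) (hn : ∀ i, (n i : ℕ∞) ≤ x.deg i) (E : Set Λ.Mor),
    Λ.IsFE (x.vert n hn) E →
    ∃ (p : Fin k → ℕ) (hp : ∀ i, ((n + p) i : ℕ∞) ≤ x.deg i),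
      x.seg n (n + p) le_self_add hp ∈ E

/-- The set of boundary paths with range `v` is `v∂Λ`. -/

private lemma enat_aux {a b : ℕ} {D : ℕ∞} (h2 : (a : ℕ∞) ≤ D) (h1 : (b : ℕ∞) ≤ D - a) :
    ((a + b : ℕ) : ℕ∞) ≤ D := by
  cases D with
  | top => exact le_top
  | coe dN =>
    have ha : a ≤ dN := by exact_mod_cast h2
    rw [← ENat.natCast_sub] at h1
    have hb : b ≤ dN - a := by exact_mod_cast h1
    exact_mod_cast (by omega : a + b ≤ dN)

/-- The shifted path `σ^m(x)`. -/
def InfPath.shift {Λ : KGraph k} (x : Λ.InfPath) (m : Fin k → ℕ) (hm : ∀ i, (m i : ℕ∞) ≤ x.deg i) :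
    Λ.InfPath where
  deg := fun i => x.deg i - (m i : ℕ∞)
  seg := fun p q hpq hq => x.seg (m + p) (m + q) (add_le_add_right hpq m)
    (fun i => by
      have := enat_aux (hm i) (hq i)
      simpa using this)
  d_seg := fun p q hpq hq => by
    rw [x.d_seg]
    funext i
    simp only [Pi.sub_apply, Pi.add_apply]
    omega
  comp_seg := fun p q r hpq hqr hq hr =>
    x.comp_seg (m + p) (m + q) (m + r) (add_le_add_right hpq m) (add_le_add_right hqr m) _ _

/-- `w = lam · z` : the path `w` extends `z` by the finite path `lam`,
i.e. `w(0, d lam) = lam` and `σ^{d lam}(w) = z`. -/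
def InfPath.ExtendsBy {Λ : KGraph k} (w z : Λ.InfPath) (lam : Λ.Mor) : Prop :=
  ∃ h : ∀ i, ((Λ.d lam) i : ℕ∞) ≤ w.deg i,
    w.seg 0 (Λ.d lam) zero_le h = lam ∧ w.shift (Λ.d lam) h = z

/-- Local periodicity `m, n` at `v`. -/
def LocalPeriodicity (m n : Fin k → ℕ) (v : Λ.Obj) : Prop :=
  ∀ x : Λ.InfPath, Λ.IsBoundary x → x.rng = v →
    (∀ i, (((m ⊔ n) i : ℕ) : ℕ∞) ≤ x.deg i) ∧
    ∃ (hm : ∀ i, (m i : ℕ∞) ≤ x.deg i) (hn : ∀ i, (n i : ℕ∞) ≤ x.deg i),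
      x.shift m hm = x.shift n hn

/-- Cofinality of `Λ`, stated in terms of finite paths. -/
def Cofinal : Prop :=
  ∀ v w : Λ.Obj, ∃ E : Set Λ.Mor, Λ.IsFE w E ∧
    ∀ α ∈ E, ∃ lam : Λ.Mor, Λ.r lam = v ∧ Λ.s lam = Λ.s α



section

variable {Λ}

def IsComp (μ ν lam : Λ.Mor) : Prop :=
  ∃ h : Λ.s μ = Λ.r ν, lam = Λ.comp μ ν h

namespace IsComp

variable {μ ν ρ a b lam lam' μ' ν' : Λ.Mor}

lemma src_eq (h : Λ.IsComp μ ν lam) : Λ.s μ = Λ.r ν := h.1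

lemma r_eq (h : Λ.IsComp μ ν lam) : Λ.r lam = Λ.r μ := by
  obtain ⟨h, rfl⟩ := h; exact Λ.r_comp _ _ _

lemma s_eq (h : Λ.IsComp μ ν lam) : Λ.s lam = Λ.s ν := by
  obtain ⟨h, rfl⟩ := h; exact Λ.s_comp _ _ _

lemma d_eq (h : Λ.IsComp μ ν lam) : Λ.d lam = Λ.d μ + Λ.d ν := by
  obtain ⟨h, rfl⟩ := h; exact Λ.d_comp _ _ _

lemma d_le (h : Λ.IsComp μ ν lam) : Λ.d μ ≤ Λ.d lam := by
  rw [h.d_eq]; exact le_self_add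

lemma assoc_left (h₁ : Λ.IsComp μ ν a) (h₂ : Λ.IsComp a ρ lam) :
    ∃ b, Λ.IsComp ν ρ b ∧ Λ.IsComp μ b lam := by
  obtain ⟨h₁, rfl⟩ := h₁
  obtain ⟨h₂, rfl⟩ := h₂
  have h₂' : Λ.s ν = Λ.r ρ := (Λ.s_comp μ ν h₁).symm.trans h₂
  exact ⟨_, ⟨h₂', rfl⟩, ⟨h₁.trans (Λ.r_comp ν ρ h₂').symm, Λ.assoc μ ν ρ h₁ h₂'⟩⟩

lemma assoc_right (h₁ : Λ.IsComp ν ρ b) (h₂ : Λ.IsComp μ b lam) :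
    ∃ a, Λ.IsComp μ ν a ∧ Λ.IsComp a ρ lam := by
  obtain ⟨h₁, rfl⟩ := h₁
  obtain ⟨h₂, rfl⟩ := h₂
  have h₂' : Λ.s μ = Λ.r ν := h₂.trans (Λ.r_comp ν ρ h₁)
  exact ⟨_, ⟨h₂', rfl⟩, ⟨(Λ.s_comp μ ν h₂').trans h₁, (Λ.assoc μ ν ρ h₂' h₁).symm⟩⟩

lemma right_unique (h : Λ.IsComp μ ν lam) (h' : Λ.IsComp μ ν lam') : lam = lam' :=
  h.2.trans h'.2.symm

lemma unique (h : Λ.IsComp μ ν lam) (h' : Λ.IsComp μ' ν' lam) (hd : Λ.d μ = Λ.d μ') :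
    μ = μ' ∧ ν = ν' := by
  have hdν : Λ.d ν = Λ.d ν' := add_left_cancel (h.d_eq.symm.trans (hd ▸ h'.d_eq))
  have := (Λ.factor lam (Λ.d μ) (Λ.d ν) h.d_eq).unique (y₁ := ⟨(μ, ν), h.1⟩)
    (y₂ := ⟨(μ', ν'), h'.1⟩) ⟨rfl, rfl, h.2⟩ ⟨hd.symm, hdν.symm, h'.2⟩
  exact ⟨congrArg (·.val.1) this, congrArg (·.val.2) this⟩

end IsComp

lemma isComp_comp {μ ν : Λ.Mor} (h : Λ.s μ = Λ.r ν) : Λ.IsComp μ ν (Λ.comp μ ν h) := ⟨h, rfl⟩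

lemma isComp_id_left (μ : Λ.Mor) : Λ.IsComp (Λ.id (Λ.r μ)) μ μ :=
  ⟨Λ.s_id _, (Λ.id_comp μ).symm⟩

lemma isComp_id_right (μ : Λ.Mor) : Λ.IsComp μ (Λ.id (Λ.s μ)) μ :=
  ⟨(Λ.r_id _).symm, (Λ.comp_id μ).symm⟩

lemma exists_isComp {lam : Λ.Mor} {m : Fin k → ℕ} (h : m ≤ Λ.d lam) :
    ∃ μ ν, Λ.IsComp μ ν lam ∧ Λ.d μ = m := by
  obtain ⟨⟨⟨μ, ν⟩, hc⟩, hμ, -, e⟩ :=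
    (Λ.factor lam m (Λ.d lam - m) (add_tsub_cancel_of_le h).symm).exists
  exact ⟨μ, ν, ⟨hc, e⟩, hμ⟩

lemma seg_spec (lam : Λ.Mor) (p q : Fin k → ℕ) (hpq : p ≤ q) (hq : q ≤ Λ.d lam) :
    Λ.d (Λ.seg lam p q hpq hq) = q - p ∧
      ∃ β a γ, Λ.IsComp β (Λ.seg lam p q hpq hq) a ∧ Λ.IsComp a γ lam ∧ Λ.d β = p := by
  have h₁ : Λ.d lam = p + (Λ.d lam - p) := (add_tsub_cancel_of_le (hpq.trans hq)).symm
  obtain ⟨hd₁, hd₁', e₁⟩ := (Λ.factor lam p (Λ.d lam - p) h₁).exists.choose_spec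
  set c₁ := (Λ.factor lam p (Λ.d lam - p) h₁).exists.choose
  have h₂ : Λ.d c₁.val.2 = (q - p) + (Λ.d lam - q) := by
    rw [hd₁', ← tsub_add_tsub_cancel hq hpq, add_comm]
  obtain ⟨hd₂, -, e₂⟩ := (Λ.factor c₁.val.2 (q - p) (Λ.d lam - q) h₂).exists.choose_spec
  set c₂ := (Λ.factor c₁.val.2 (q - p) (Λ.d lam - q) h₂).exists.choose
  have hseg : Λ.seg lam p q hpq hq = c₂.val.1 := rfl
  obtain ⟨a, ha, hlam⟩ := IsComp.assoc_right ⟨c₂.2, e₂⟩ ⟨c₁.2, e₁⟩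
  exact ⟨hseg ▸ hd₂, c₁.val.1, a, c₂.val.2, hseg ▸ ha, hlam, hd₁⟩

lemma seg_eq_of_isComp {lam β σ a γ : Λ.Mor} {p q : Fin k → ℕ} (hpq : p ≤ q)
    (hq : q ≤ Λ.d lam) (h₁ : Λ.IsComp β σ a) (h₂ : Λ.IsComp a γ lam) (hβ : Λ.d β = p)
    (hσ : Λ.d σ = q - p) : Λ.seg lam p q hpq hq = σ := by
  obtain ⟨hd, β', a', γ', h₁', h₂', hβ'⟩ := seg_spec lam p q hpq hq
  have ha : Λ.d a = Λ.d a' := by rw [h₁.d_eq, h₁'.d_eq, hβ, hβ', hσ, hd]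
  obtain ⟨rfl, -⟩ := h₂.unique h₂' ha
  exact ((h₁.unique h₁' (hβ.trans hβ'.symm)).2).symm

namespace InitSeg

variable {μ ν lam ζ a b : Λ.Mor}

lemma refl (μ : Λ.Mor) : Λ.InitSeg μ μ := ⟨_, isComp_id_right μ⟩

lemma trans (h₁ : Λ.InitSeg μ ν) (h₂ : Λ.InitSeg ν lam) : Λ.InitSeg μ lam := by
  obtain ⟨ρ, hρ⟩ := h₁
  obtain ⟨σ, hσ⟩ := h₂
  obtain ⟨b, -, hb⟩ := IsComp.assoc_left hρ hσ
  exact ⟨b, hb⟩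

lemma d_le (h : Λ.InitSeg μ lam) : Λ.d μ ≤ Λ.d lam := by
  obtain ⟨ρ, hρ⟩ := h
  exact IsComp.d_le hρ

lemma r_eq (h : Λ.InitSeg μ lam) : Λ.r lam = Λ.r μ := by
  obtain ⟨ρ, hρ⟩ := h
  exact IsComp.r_eq hρ

lemma of_isComp (hμ : Λ.InitSeg μ ζ) (h : Λ.IsComp a b ζ) (hd : Λ.d μ ≤ Λ.d a) :
    Λ.InitSeg μ a := by
  obtain ⟨μ', c, hc, hμ'⟩ := exists_isComp hd
  obtain ⟨ρ, hρ⟩ := hμ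
  obtain ⟨cb, -, hζ⟩ := hc.assoc_left h
  obtain ⟨rfl, -⟩ := IsComp.unique hρ hζ hμ'.symm
  exact ⟨c, hc⟩

end InitSeg

lemma IsComp.initSeg_iff {μ τ ξ a ζ : Λ.Mor} (hτ : Λ.IsComp μ τ a) (hξ : Λ.IsComp μ ξ ζ) :
    Λ.InitSeg a ζ ↔ Λ.InitSeg τ ξ := by
  constructor
  · rintro ⟨η, hη : Λ.IsComp a η ζ⟩
    obtain ⟨b, hb, hζ⟩ := hτ.assoc_left hη
    obtain ⟨-, rfl⟩ := hξ.unique hζ rfl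
    exact ⟨η, hb⟩
  · rintro ⟨η, hη : Λ.IsComp τ η ξ⟩
    obtain ⟨a', ha', hζ⟩ := hη.assoc_right hξ
    obtain rfl := hτ.right_unique ha'
    exact ⟨η, hζ⟩

lemma seg_eq_of_initSeg {lam lam' : Λ.Mor} (h : Λ.InitSeg lam lam') {p q : Fin k → ℕ}
    (hpq : p ≤ q) (hq : q ≤ Λ.d lam) (hq' : q ≤ Λ.d lam') :
    Λ.seg lam' p q hpq hq' = Λ.seg lam p q hpq hq := by
  obtain ⟨hd, β, a, γ, h₁, h₂, hβ⟩ := seg_spec lam p q hpq hq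
  obtain ⟨ρ, hρ⟩ := h
  obtain ⟨γρ, -, h₂'⟩ := h₂.assoc_left hρ
  exact seg_eq_of_isComp hpq hq' h₁ h₂' hβ hd

lemma isComp_seg_seg (lam : Λ.Mor) {p q r : Fin k → ℕ} (hpq : p ≤ q) (hqr : q ≤ r)
    (hr : r ≤ Λ.d lam) :
    Λ.IsComp (Λ.seg lam p q hpq (hqr.trans hr)) (Λ.seg lam q r hqr hr)
      (Λ.seg lam p r (hpq.trans hqr) hr) := by
  obtain ⟨hdσ, β, a, γ, h₁, h₂, hβ⟩ := seg_spec lam p q hpq (hqr.trans hr)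
  obtain ⟨hdτ, β', a', γ', h₁', h₂', hβ'⟩ := seg_spec lam q r hqr hr
  obtain ⟨τγ', -, hlam⟩ := h₁'.assoc_left h₂'
  have ha : Λ.d a = Λ.d β' := by rw [h₁.d_eq, hβ, hβ', hdσ, add_tsub_cancel_of_le hpq]
  obtain ⟨rfl, -⟩ := h₂.unique hlam ha
  obtain ⟨b, hb, ha'⟩ := h₁.assoc_left h₁'
  rwa [seg_eq_of_isComp (hpq.trans hqr) hr ha' h₂' hβ (by
    rw [hb.d_eq, hdσ, hdτ, add_comm, tsub_add_tsub_cancel hqr hpq])]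

lemma exists_mem_MCE_initSeg {μ ν ζ : Λ.Mor} (hμ : Λ.InitSeg μ ζ) (hν : Λ.InitSeg ν ζ) :
    ∃ ζ₀ ∈ Λ.MCE μ ν, Λ.InitSeg ζ₀ ζ := by
  obtain ⟨ζ₀, η, h, hd⟩ := exists_isComp (sup_le hμ.d_le hν.d_le)
  exact ⟨ζ₀, ⟨hd, hμ.of_isComp h (hd ▸ le_sup_left), hν.of_isComp h (hd ▸ le_sup_right)⟩, η, h⟩

lemma MCE_nonempty_of_initSeg {μ ν ζ : Λ.Mor} (hμ : Λ.InitSeg μ ζ) (hν : Λ.InitSeg ν ζ) :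
    (Λ.MCE μ ν).Nonempty :=
  let ⟨ζ₀, h, _⟩ := exists_mem_MCE_initSeg hμ hν
  ⟨ζ₀, h⟩

lemma isFE_singleton_id (u : Λ.Obj) : Λ.IsFE u {Λ.id u} := by
  refine ⟨Set.finite_singleton _, fun α hα => hα ▸ Λ.r_id u, ?_⟩
  rintro μ rfl
  exact ⟨_, rfl, MCE_nonempty_of_initSeg (InitSeg.refl μ) ⟨μ, isComp_id_left μ⟩⟩

lemma IsFE.refine {u : Λ.Obj} {F : Set Λ.Mor} (hF : Λ.IsFE u F) {E : Λ.Mor → Set Λ.Mor}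
    (hE : ∀ ρ ∈ F, Λ.IsFE (Λ.s ρ) (E ρ)) :
    Λ.IsFE u {β | ∃ ρ ∈ F, ∃ γ ∈ E ρ, Λ.IsComp ρ γ β} := by
  refine ⟨?_, ?_, ?_⟩
  · refine (hF.1.biUnion fun ρ hρ => (hE ρ hρ).1.biUnion fun γ _ =>
      Set.Subsingleton.finite (s := {β | Λ.IsComp ρ γ β})
        fun β h β' h' => IsComp.right_unique h h').subset ?_
    rintro β ⟨ρ, hρ, γ, hγ, h⟩
    exact Set.mem_biUnion hρ (Set.mem_biUnion hγ h)
  · rintro β ⟨ρ, hρ, γ, -, h⟩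
    rw [h.r_eq]
    exact hF.2.1 ρ hρ
  · intro μ hμ
    obtain ⟨ρ, hρ, ζ, -, hμζ, ξ, hξ : Λ.IsComp ρ ξ ζ⟩ := hF.2.2 μ hμ
    obtain ⟨γ, hγ, η, -, hξη, hγη⟩ := (hE ρ hρ).2.2 ξ hξ.src_eq.symm
    have hρη := isComp_comp (μ := ρ) (ν := η) (hξ.src_eq.trans hξη.r_eq.symm)
    have hργ := isComp_comp (μ := ρ) (ν := γ) ((hE ρ hρ).2.1 γ hγ).symm
    exact ⟨_, ⟨ρ, hρ, γ, hγ, hργ⟩, MCE_nonempty_of_initSeg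
      (hμζ.trans ((hξ.initSeg_iff hρη).2 hξη)) ((hργ.initSeg_iff hρη).2 hγη)⟩

/-- The set `Ext(μ; E)` of Raeburn, Sims and Yeend. -/
def Ext (μ : Λ.Mor) (E : Set Λ.Mor) : Set Λ.Mor :=
  {ρ | ∃ α ∈ E, ∃ ζ ∈ Λ.MCE μ α, Λ.IsComp μ ρ ζ}

lemma isFE_Ext (hFA : Λ.FinitelyAligned) {μ : Λ.Mor} {E : Set Λ.Mor} (hE : Λ.IsFE (Λ.r μ) E) :
    Λ.IsFE (Λ.s μ) (Λ.Ext μ E) := by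
  refine ⟨?_, ?_, ?_⟩
  · refine (hE.1.biUnion fun α _ => (hFA μ α).biUnion fun ζ _ =>
      Set.Subsingleton.finite (s := {ρ | Λ.IsComp μ ρ ζ})
        fun ρ h ρ' h' => (IsComp.unique h h' rfl).2).subset ?_
    rintro ρ ⟨α, hα, ζ, hζ, h⟩
    exact Set.mem_biUnion hα (Set.mem_biUnion hζ h)
  · rintro ρ ⟨-, -, ζ, -, h⟩
    exact (h : Λ.IsComp μ ρ ζ).src_eq.symm
  · intro τ hτ
    have hμτ := isComp_comp (μ := μ) (ν := τ) hτ.symm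
    obtain ⟨α, hα, ζ, -, hμτζ, hαζ⟩ := hE.2.2 _ hμτ.r_eq
    have hμζ : Λ.InitSeg μ ζ := InitSeg.trans ⟨τ, hμτ⟩ hμτζ
    obtain ⟨ζ₀, hζ₀, hζ₀ζ⟩ := exists_mem_MCE_initSeg hμζ hαζ
    obtain ⟨ρ, hρ : Λ.IsComp μ ρ ζ₀⟩ := hζ₀.2.1
    obtain ⟨ξ, hξ : Λ.IsComp μ ξ ζ⟩ := hμζ
    exact ⟨ρ, ⟨α, hα, ζ₀, hζ₀, hρ⟩, MCE_nonempty_of_initSeg ((hμτ.initSeg_iff hξ).1 hμτζ)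
      ((IsComp.initSeg_iff hρ hξ).1 hζ₀ζ)⟩

def Reach (v u : Λ.Obj) : Prop :=
  ∃ lam : Λ.Mor, Λ.r lam = v ∧ Λ.s lam = u

def CofinalAt (v u : Λ.Obj) : Prop :=
  ∃ E, Λ.IsFE u E ∧ ∀ α ∈ E, Λ.Reach v (Λ.s α)

variable {v : Λ.Obj}

lemma Reach.extend {lam : Λ.Mor} (h : Λ.Reach v (Λ.r lam)) : Λ.Reach v (Λ.s lam) := by
  obtain ⟨η, hr, hs⟩ := h
  have hη := isComp_comp (μ := η) (ν := lam) hs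
  exact ⟨_, hη.r_eq.trans hr, hη.s_eq⟩

lemma Reach.of_r_seg {lam : Λ.Mor} {p q : Fin k → ℕ} {hpq : p ≤ q} {hq : q ≤ Λ.d lam}
    (h : Λ.Reach v (Λ.r (Λ.seg lam p q hpq hq))) : Λ.Reach v (Λ.s lam) := by
  obtain ⟨-, β, a, γ, h₁, h₂, -⟩ := seg_spec lam p q hpq hq
  have hγ : Λ.Reach v (Λ.r γ) := by
    rw [← h₂.src_eq, h₁.s_eq]
    exact h.extend
  rw [h₂.s_eq]
  exact hγ.extend

lemma cofinalAt_of_reach {u : Λ.Obj} (h : Λ.Reach v u) : Λ.CofinalAt v u :=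
  ⟨{Λ.id u}, isFE_singleton_id u, fun α hα => by rwa [hα, Λ.s_id]⟩

lemma cofinalAt_of_isFE {u : Λ.Obj} {F : Set Λ.Mor} (hF : Λ.IsFE u F)
    (h : ∀ ρ ∈ F, Λ.CofinalAt v (Λ.s ρ)) : Λ.CofinalAt v u := by
  choose! E hE hreach using h
  refine ⟨_, hF.refine hE, ?_⟩
  rintro β ⟨ρ, hρ, γ, hγ, h⟩
  rw [h.s_eq]
  exact hreach ρ hρ γ hγ

lemma exists_extension_hitting (hFA : Λ.FinitelyAligned) {μ : Λ.Mor}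
    (hμ : ¬ Λ.CofinalAt v (Λ.s μ)) {n : Fin k → ℕ} (hn : n ≤ Λ.d μ) {E : Set Λ.Mor}
    (hE : Λ.IsFE (Λ.r (Λ.seg μ n n le_rfl hn)) E) :
    ∃ μ', Λ.InitSeg μ μ' ∧ ¬ Λ.CofinalAt v (Λ.s μ') ∧
      ∃ α ∈ E, ∃ h : n + Λ.d α ≤ Λ.d μ', Λ.seg μ' n (n + Λ.d α) le_self_add h = α := by
  obtain ⟨-, β, a, γ, h₁, h₂, hβ⟩ := seg_spec μ n n le_rfl hn
  obtain ⟨τ, hτ, hβτ⟩ := h₁.assoc_left h₂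
  have hExt := isFE_Ext hFA (hτ.r_eq ▸ hE : Λ.IsFE (Λ.r τ) E)
  rw [hτ.s_eq, ← h₂.s_eq] at hExt
  obtain ⟨ρ, ⟨α, hα, ζ, hζ, hτρ⟩, hρ⟩ : ∃ ρ ∈ Λ.Ext τ E, ¬ Λ.CofinalAt v (Λ.s ρ) := by
    by_contra! h
    exact hμ (cofinalAt_of_isFE hExt h)
  have hμρ := isComp_comp (μ := μ) (ν := ρ) (hβτ.s_eq.trans (hτρ : Λ.IsComp τ ρ ζ).src_eq)
  obtain ⟨ζ', hζ', hβζ⟩ := hβτ.assoc_left hμρ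
  obtain rfl := hτρ.right_unique hζ'
  obtain ⟨κ, hκ : Λ.IsComp α κ ζ⟩ := hζ.2.2
  obtain ⟨βα, hβα, hμρ'⟩ := hκ.assoc_right hβζ
  refine ⟨_, ⟨ρ, hμρ⟩, hμρ.s_eq ▸ hρ, α, hα, hβ ▸ hβα.d_eq ▸ hμρ'.d_le, ?_⟩
  exact seg_eq_of_isComp _ _ hβα hμρ' hβ (add_tsub_cancel_left n _).symm

lemma exists_le_of_le_iSup {ι : Type*} [Finite ι] {f : ℕ → ι → ℕ} (hf : Monotone f)
    {q : ι → ℕ} (hq : ∀ i, (q i : ℕ∞) ≤ ⨆ j, (f j i : ℕ∞)) : ∃ j, q ≤ f j := by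
  have hev : ∀ i, ∀ᶠ j in Filter.atTop, q i ≤ f j i := by
    intro i
    obtain ⟨j₀, hj₀⟩ : ∃ j, q i ≤ f j i := by
      rcases (q i).eq_zero_or_pos with h | h
      · exact ⟨0, by omega⟩
      · obtain ⟨j, hj⟩ := lt_iSup_iff.1 ((Nat.cast_lt.2 (Nat.sub_lt h one_pos)).trans_le (hq i))
        exact ⟨j, Nat.le_of_pred_lt (Nat.cast_lt.1 hj)⟩
    exact Filter.eventually_atTop.2 ⟨j₀, fun j hj => hj₀.trans (hf hj i)⟩
  exact (Filter.eventually_all.2 hev).exists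

section Limit

variable {μ : ℕ → Λ.Mor}

lemma initSeg_of_le (hμ : ∀ j, Λ.InitSeg (μ j) (μ (j + 1))) {i j : ℕ} (h : i ≤ j) :
    Λ.InitSeg (μ i) (μ j) := by
  induction j, h using Nat.le_induction with
  | base => exact InitSeg.refl _
  | succ j _ ih => exact ih.trans (hμ j)

lemma seg_eq_seg_of_chain (hμ : ∀ j, Λ.InitSeg (μ j) (μ (j + 1))) {p q : Fin k → ℕ}
    (hpq : p ≤ q) {i j : ℕ} (hi : q ≤ Λ.d (μ i)) (hj : q ≤ Λ.d (μ j)) :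
    Λ.seg (μ i) p q hpq hi = Λ.seg (μ j) p q hpq hj := by
  rcases le_total i j with h | h
  · exact (seg_eq_of_initSeg (initSeg_of_le hμ h) hpq hi hj).symm
  · exact seg_eq_of_initSeg (initSeg_of_le hμ h) hpq hj hi

lemma exists_le_d_of_le_iSup (hμ : ∀ j, Λ.InitSeg (μ j) (μ (j + 1))) {q : Fin k → ℕ}
    (hq : ∀ i, (q i : ℕ∞) ≤ ⨆ j, (Λ.d (μ j) i : ℕ∞)) :
    ∃ j, q ≤ Λ.d (μ j) :=
  exists_le_of_le_iSup (fun _ _ h => (initSeg_of_le hμ h).d_le) hq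

noncomputable def limPath (hμ : ∀ j, Λ.InitSeg (μ j) (μ (j + 1))) : Λ.InfPath where
  deg i := ⨆ j, (Λ.d (μ j) i : ℕ∞)
  seg p q hpq hq := Λ.seg (μ (exists_le_d_of_le_iSup hμ hq).choose) p q hpq
    (exists_le_d_of_le_iSup hμ hq).choose_spec
  d_seg p q hpq hq := (seg_spec _ p q hpq _).1
  comp_seg p q r hpq hqr hq hr := by
    have h := isComp_seg_seg (μ (exists_le_d_of_le_iSup hμ hr).choose) hpq hqr
      (exists_le_d_of_le_iSup hμ hr).choose_spec
    rw [← seg_eq_seg_of_chain hμ hpq (exists_le_d_of_le_iSup hμ hq).choose_spec] at h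
    exact ⟨h.src_eq, h.2.symm⟩

lemma limPath_seg (hμ : ∀ j, Λ.InitSeg (μ j) (μ (j + 1))) {p q : Fin k → ℕ} (hpq : p ≤ q) (hq)
    (j : ℕ) (hj : q ≤ Λ.d (μ j)) :
    (limPath hμ).seg p q hpq hq = Λ.seg (μ j) p q hpq hj :=
  seg_eq_seg_of_chain hμ hpq (exists_le_d_of_le_iSup hμ hq).choose_spec hj

lemma le_limPath_deg (hμ : ∀ j, Λ.InitSeg (μ j) (μ (j + 1))) {q : Fin k → ℕ} {j : ℕ}
    (hj : q ≤ Λ.d (μ j)) (i : Fin k) :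
    (q i : ℕ∞) ≤ (limPath hμ).deg i :=
  le_iSup_of_le (f := fun j => (Λ.d (μ j) i : ℕ∞)) j (Nat.cast_le.2 (hj i))

end Limit

lemma exists_seq_frequently_eq (α : Type*) [Countable α] [Nonempty α] :
    ∃ e : ℕ → α, ∀ a, ∃ᶠ j in Filter.atTop, e j = a := by
  obtain ⟨f, hf⟩ := exists_surjective_nat α
  refine ⟨fun j => f j.unpair.2, fun a => Filter.frequently_atTop.2 fun N => ?_⟩
  obtain ⟨b, rfl⟩ := hf a
  exact ⟨Nat.pair N b, Nat.left_le_pair N b, by simp⟩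

lemma exists_extension (hFA : Λ.FinitelyAligned) {μ : Λ.Mor} (hμ : ¬ Λ.CofinalAt v (Λ.s μ))
    (t : (Fin k → ℕ) × Finset Λ.Mor) :
    ∃ μ', Λ.InitSeg μ μ' ∧ ¬ Λ.CofinalAt v (Λ.s μ') ∧
      ∀ hn : t.1 ≤ Λ.d μ, Λ.IsFE (Λ.r (Λ.seg μ t.1 t.1 le_rfl hn)) t.2 →
        ∃ α ∈ t.2, ∃ h : t.1 + Λ.d α ≤ Λ.d μ',
          Λ.seg μ' t.1 (t.1 + Λ.d α) le_self_add h = α := by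
  by_cases h : ∃ hn : t.1 ≤ Λ.d μ, Λ.IsFE (Λ.r (Λ.seg μ t.1 t.1 le_rfl hn)) t.2
  · obtain ⟨hn, hE⟩ := h
    obtain ⟨μ', h₁, h₂, h₃⟩ := exists_extension_hitting hFA hμ hn hE
    exact ⟨μ', h₁, h₂, fun _ _ => h₃⟩
  · exact ⟨μ, InitSeg.refl μ, hμ, fun hn hE => (h ⟨hn, hE⟩).elim⟩

noncomputable def avoidingChain (hFA : Λ.FinitelyAligned) (e : ℕ → (Fin k → ℕ) × Finset Λ.Mor)
    {w : Λ.Obj} (hw : ¬ Λ.CofinalAt v w) : ℕ → {μ : Λ.Mor // ¬ Λ.CofinalAt v (Λ.s μ)}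
  | 0 => ⟨Λ.id w, by rwa [Λ.s_id]⟩
  | j + 1 => ⟨(exists_extension hFA (avoidingChain hFA e hw j).2 (e j)).choose,
      (exists_extension hFA (avoidingChain hFA e hw j).2 (e j)).choose_spec.2.1⟩

lemma exists_isBoundary_forall_not_reach (hFA : Λ.FinitelyAligned) {w : Λ.Obj}
    (hw : ¬ Λ.CofinalAt v w) :
    ∃ x : Λ.InfPath, Λ.IsBoundary x ∧ ∀ n hn, ¬ Λ.Reach v (x.vert n hn) := by
  have := Λ.countableMor
  obtain ⟨e, he⟩ := exists_seq_frequently_eq ((Fin k → ℕ) × Finset Λ.Mor)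
  have hstep := fun j => (exists_extension hFA (avoidingChain hFA e hw j).2 (e j)).choose_spec
  have hμ : ∀ j, Λ.InitSeg (avoidingChain hFA e hw j).1 (avoidingChain hFA e hw (j + 1)).1 :=
    fun j => (hstep j).1
  refine ⟨limPath hμ, fun n hn E hE => ?_, fun n hn hreach => ?_⟩
  · obtain ⟨j₀, hj₀⟩ := exists_le_d_of_le_iSup hμ hn
    obtain ⟨j, hj, hej⟩ := Filter.frequently_atTop.1 (he (n, hE.1.toFinset)) j₀
    obtain rfl : ((e j).2 : Set Λ.Mor) = E := by rw [hej, Set.Finite.coe_toFinset]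
    obtain rfl : (e j).1 = n := by rw [hej]
    have hnj := hj₀.trans (initSeg_of_le hμ hj).d_le
    obtain ⟨α, hα, hle, hseg⟩ := (hstep j).2.2 hnj (by rwa [← limPath_seg hμ le_rfl hn])
    refine ⟨Λ.d α, le_limPath_deg hμ (j := j + 1) hle, ?_⟩
    rw [(limPath_seg hμ _ _ (j + 1) hle).trans hseg]
    exact hα
  · obtain ⟨j, hj⟩ := exists_le_d_of_le_iSup hμ hn
    rw [InfPath.vert, limPath_seg hμ le_rfl hn j hj] at hreach
    exact (avoidingChain hFA e hw j).2 (cofinalAt_of_reach hreach.of_r_seg)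

lemma InfPath.s_seg (x : Λ.InfPath) {p q : Fin k → ℕ} (hpq : p ≤ q) (hq) :
    Λ.s (x.seg p q hpq hq) = x.vert q hq :=
  (x.comp_seg p q q hpq le_rfl hq hq).1

lemma Cofinal.exists_reach_vert (hc : Λ.Cofinal) (v : Λ.Obj) {x : Λ.InfPath}
    (hx : Λ.IsBoundary x) :
    ∃ (n : Fin k → ℕ) (hn : ∀ i, (n i : ℕ∞) ≤ x.deg i) (lam : Λ.Mor),
      Λ.r lam = v ∧ Λ.s lam = x.vert n hn := by
  obtain ⟨E, hE, hreach⟩ := hc v x.rng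
  obtain ⟨p, hp, hmem⟩ := hx 0 (fun i => by simp) E hE
  obtain ⟨lam, hr, hs⟩ := hreach _ hmem
  exact ⟨0 + p, hp, lam, hr, hs.trans (x.s_seg _ _)⟩

end

/-- A finitely aligned `k`-graph is cofinal iff every vertex can reach
every boundary path. -/
theorem cofinal_iff_reaches_boundary_paths (hFA : Λ.FinitelyAligned) :
    Λ.Cofinal ↔
      ∀ (v : Λ.Obj) (x : Λ.InfPath), Λ.IsBoundary x →
        ∃ (n : Fin k → ℕ) (hn : ∀ i, (n i : ℕ∞) ≤ x.deg i) (lam : Λ.Mor),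
          Λ.r lam = v ∧ Λ.s lam = x.vert n hn := by
  refine ⟨fun hc v x hx => hc.exists_reach_vert v hx, fun h v w => ?_⟩
  show Λ.CofinalAt v w
  by_contra hvw
  obtain ⟨x, hx, hxv⟩ := exists_isBoundary_forall_not_reach hFA hvw
  obtain ⟨n, hn, lam, hr, hs⟩ := h v x hx
  exact hxv n hn ⟨lam, hr, hs⟩

end KGraph
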